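/- arXiv:2107.00937 — 2 statements merged into one kernel-verified Lean document; each statement's English description precedes it below -/
import Mathlib

section
/- Let T and T' be non-obtuse labeled triangles in the Euclidean plane having the same area, and let {i,j,k} = {1,2,3}. If θ_i > θ'_i, θ_j < θ'_j and θ_k > θ'_k, then M(T,T') = ‖e'_j‖/‖e_j‖ and this value is strictly greater than max(‖e_k‖/‖e'_k‖, ‖e'_k‖/‖e_k‖). -/
open Metric Set ENNReal

noncomputable section

abbrev E2 := EuclideanSpace ℝ (Fin 2)

/-- The (filled) triangle with labeled vertices `v 0, v 1, v 2`. -/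
def Tri (v : Fin 3 → E2) : Set E2 := convexHull ℝ (Set.range v)

/-- `edgeLen v i` is the length of the edge opposite to vertex `i`. -/
def edgeLen (v : Fin 3 → E2) (i : Fin 3) : ℝ := dist (v (i + 1)) (v (i + 2))

/-- `altLen v i` is the length of the altitude from vertex `i`. -/
def altLen (v : Fin 3 → E2) (i : Fin 3) : ℝ :=
  Metric.infDist (v i) ((affineSpan ℝ ({v (i + 1), v (i + 2)} : Set E2) : Set E2))

/-- `ang v i` is the interior angle at vertex `i`. -/
def ang (v : Fin 3 → E2) (i : Fin 3) : ℝ :=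
  EuclideanGeometry.angle (v (i + 1)) (v i) (v (i + 2))

def IsAcute (v : Fin 3 → E2) : Prop := ∀ i, ang v i < Real.pi / 2

def IsNonObtuse (v : Fin 3 → E2) : Prop := ∀ i, ang v i ≤ Real.pi / 2

def triArea (v : Fin 3 → E2) : ℝ := edgeLen v 0 * altLen v 0 / 2

/-- `f` restricts to a label-preserving homeomorphism from the triangle on `v`
onto the triangle on `v'`. -/
def IsLabelHomeo (v v' : Fin 3 → E2) (f : E2 → E2) : Prop :=
  ContinuousOn f (Tri v) ∧ Set.BijOn f (Tri v) (Tri v') ∧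
  (∃ g : E2 → E2, ContinuousOn g (Tri v') ∧ Set.InvOn g f (Tri v) (Tri v')) ∧
  ∀ i, f (v i) = v' i

/-- The Lipschitz constant `L(f)` of `f` on the triangle on `v`,
`sup {dist (f x) (f y) / dist x y : x ≠ y}`, as a value in `ℝ≥0∞`. -/
def lipConst (v : Fin 3 → E2) (f : E2 → E2) : ℝ≥0∞ :=
  ⨆ x ∈ Tri v, ⨆ y ∈ Tri v, edist (f x) (f y) / edist x y

/-- `Λ(T,T')`: infimum of Lipschitz constants of label-preserving homeomorphisms. -/
def Lam (v v' : Fin 3 → E2) : ℝ≥0∞ :=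
  ⨅ (f : E2 → E2) (_ : IsLabelHomeo v v' f), lipConst v f

/-- `M(T,T')`: the max of the six ratios of edge lengths and altitude lengths. -/
def Mdist (v v' : Fin 3 → E2) : ℝ :=
  max (max (max (edgeLen v' 0 / edgeLen v 0) (edgeLen v' 1 / edgeLen v 1))
        (edgeLen v' 2 / edgeLen v 2))
      (max (max (altLen v' 0 / altLen v 0) (altLen v' 1 / altLen v 1))
        (altLen v' 2 / altLen v 2))


section Aux
open Metric Set EuclideanGeometry
open scoped RealInnerProductSpace

lemma infDist_line (p a b : E2) (hab : b ≠ a) :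
    Metric.infDist p ((affineSpan ℝ ({a, b} : Set E2) : Set E2))
      = Real.sin (EuclideanGeometry.angle p a b) * dist p a := by
  have hy : b - a ≠ 0 := sub_ne_zero.2 hab
  set x : E2 := p - a with hx
  set y : E2 := b - a with hyd
  have hy2 : (0:ℝ) < ‖y‖ ^ 2 := pow_pos (norm_pos_iff.2 hy) 2
  obtain ⟨c, hc⟩ : ∃ c : ℝ, c = ⟪x, y⟫ := ⟨_, rfl⟩
  have hang : EuclideanGeometry.angle p a b = InnerProductGeometry.angle x y := rfl
  have hdpa : dist p a = ‖x‖ := by rw [dist_eq_norm]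
  have hsq : (Real.sin (InnerProductGeometry.angle x y) * ‖x‖) ^ 2
      = ‖x‖ ^ 2 - c ^ 2 / ‖y‖ ^ 2 := by
    have h1 := InnerProductGeometry.sin_angle_mul_norm_mul_norm x y
    have h2 : (Real.sin (InnerProductGeometry.angle x y) * (‖x‖ * ‖y‖)) ^ 2
        = ⟪x, x⟫ * ⟪y, y⟫ - ⟪x, y⟫ * ⟪x, y⟫ := by
      rw [h1]; exact Real.sq_sqrt (by nlinarith [real_inner_mul_inner_self_le x y])
    rw [real_inner_self_eq_norm_sq x, real_inner_self_eq_norm_sq y, ← hc] at h2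
    field_simp
    linear_combination h2
  have hsin0 : 0 ≤ Real.sin (InnerProductGeometry.angle x y) * ‖x‖ :=
    mul_nonneg (Real.sin_nonneg_of_nonneg_of_le_pi (InnerProductGeometry.angle_nonneg x y)
      (InnerProductGeometry.angle_le_pi x y)) (norm_nonneg x)
  rw [hang, hdpa]
  apply le_antisymm
  · have hmem : (c / ‖y‖ ^ 2) • (b -ᵥ a) +ᵥ a ∈ affineSpan ℝ ({a, b} : Set E2) :=
      smul_vsub_vadd_mem_affineSpan_pair _ a b
    refine le_trans (Metric.infDist_le_dist_of_mem hmem) (le_of_eq ?_)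
    have hd : dist p ((c / ‖y‖ ^ 2) • (b -ᵥ a) +ᵥ a) = ‖x - (c / ‖y‖ ^ 2) • y‖ := by
      rw [dist_eq_norm]
      congr 1
      show p - ((c / ‖y‖ ^ 2) • (b - a) + a) = (p - a) - (c / ‖y‖ ^ 2) • (b - a)
      abel
    rw [hd]
    have hexp : ‖x - (c / ‖y‖ ^ 2) • y‖ ^ 2 = ‖x‖ ^ 2 - c ^ 2 / ‖y‖ ^ 2 := by
      rw [norm_sub_sq_real, real_inner_smul_right, norm_smul, ← hc]
      simp only [Real.norm_eq_abs, mul_pow, sq_abs]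
      field_simp
      ring
    calc ‖x - (c / ‖y‖ ^ 2) • y‖ = √(‖x - (c / ‖y‖ ^ 2) • y‖ ^ 2) :=
          (Real.sqrt_sq (norm_nonneg _)).symm
      _ = √((Real.sin (InnerProductGeometry.angle x y) * ‖x‖) ^ 2) := by rw [hexp, hsq]
      _ = Real.sin (InnerProductGeometry.angle x y) * ‖x‖ := Real.sqrt_sq hsin0
  · by_contra hcon
    push_neg at hcon
    obtain ⟨q, hq, hlt⟩ := (Metric.infDist_lt_iff
      ⟨a, by exact_mod_cast left_mem_affineSpan_pair ℝ a b⟩).1 hcon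
    have hq' : q ∈ affineSpan ℝ ({a, b} : Set E2) := hq
    obtain ⟨r, hr⟩ : ∃ r : ℝ, r • (b -ᵥ a) = q -ᵥ a := by
      rw [← vadd_left_mem_affineSpan_pair (k := ℝ) (p₁ := a) (p₂ := b) (v := q -ᵥ a)]
      simpa using hq'
    have hr' : r • y = q - a := by simpa [hyd] using hr
    have hpq : p - q = x - r • y := by rw [hr', hx]; abel
    have hexp : ‖x - r • y‖ ^ 2 = ‖x‖ ^ 2 - 2 * r * c + r ^ 2 * ‖y‖ ^ 2 := by
      rw [norm_sub_sq_real, real_inner_smul_right, norm_smul, ← hc]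
      simp only [Real.norm_eq_abs, mul_pow, sq_abs]
      ring
    have hdm : c ^ 2 / ‖y‖ ^ 2 * ‖y‖ ^ 2 = c ^ 2 := div_mul_cancel₀ _ (ne_of_gt hy2)
    have hle : (Real.sin (InnerProductGeometry.angle x y) * ‖x‖) ^ 2 ≤ ‖x - r • y‖ ^ 2 := by
      rw [hsq, hexp]
      nlinarith [sq_nonneg (r * ‖y‖ ^ 2 - c), hy2, hdm]
    have : Real.sin (InnerProductGeometry.angle x y) * ‖x‖ ≤ dist p q := by
      calc Real.sin (InnerProductGeometry.angle x y) * ‖x‖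
          = √((Real.sin (InnerProductGeometry.angle x y) * ‖x‖) ^ 2) := (Real.sqrt_sq hsin0).symm
        _ ≤ √(‖x - r • y‖ ^ 2) := Real.sqrt_le_sqrt hle
        _ = ‖x - r • y‖ := Real.sqrt_sq (norm_nonneg _)
        _ = dist p q := by rw [dist_eq_norm, hpq]
    linarith

lemma f11 : ∀ a : Fin 3, a + 1 + 1 = a + 2 := by decide
lemma f12 : ∀ a : Fin 3, a + 1 + 2 = a := by decide
lemma f21 : ∀ a : Fin 3, a + 2 + 1 = a := by decide
lemma f22 : ∀ a : Fin 3, a + 2 + 2 = a + 1 := by decide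
lemma fne1 : ∀ a : Fin 3, a + 1 ≠ a + 2 := by decide
lemma fne2 : ∀ a : Fin 3, a + 2 ≠ a + 1 := by decide

lemma edge_pos {v : Fin 3 → E2} (hv : AffineIndependent ℝ v) (a : Fin 3) :
    0 < edgeLen v a :=
  dist_pos.2 (hv.injective.ne (fne1 a))

lemma sin_ang_pos {v : Fin 3 → E2} (hv : AffineIndependent ℝ v) (a : Fin 3) :
    0 < Real.sin (ang v a) := by
  have hcol : ¬ Collinear ℝ (Set.range v) := affineIndependent_iff_not_collinear.1 hv
  have hsub : Set.range v ⊆ ({v (a + 1), v a, v (a + 2)} : Set E2) := by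
    rintro _ ⟨b, rfl⟩
    have : b = a + 1 ∨ b = a ∨ b = a + 2 := by
      revert a b; decide
    rcases this with rfl | rfl | rfl <;> simp
  have h0 : ang v a ≠ 0 := by
    intro h
    exact hcol ((EuclideanGeometry.collinear_of_angle_eq_zero h).subset hsub)
  have hpi : ang v a ≠ Real.pi := by
    intro h
    exact hcol ((EuclideanGeometry.collinear_of_angle_eq_pi h).subset hsub)
  exact Real.sin_pos_of_pos_of_lt_pi
    (lt_of_le_of_ne (EuclideanGeometry.angle_nonneg _ _ _) (Ne.symm h0))
    (lt_of_le_of_ne (EuclideanGeometry.angle_le_pi _ _ _) hpi)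

lemma alt_rep1 {v : Fin 3 → E2} (hv : AffineIndependent ℝ v) (a : Fin 3) :
    altLen v a = Real.sin (ang v (a + 1)) * edgeLen v (a + 2) := by
  have hab : v (a + 2) ≠ v (a + 1) := hv.injective.ne (fne2 a)
  have := infDist_line (v a) (v (a + 1)) (v (a + 2)) hab
  rw [altLen, this]
  congr 1
  · rw [ang, f11, f12, EuclideanGeometry.angle_comm]
  · rw [edgeLen, f21, f22]

lemma alt_rep2 {v : Fin 3 → E2} (hv : AffineIndependent ℝ v) (a : Fin 3) :
    altLen v a = Real.sin (ang v (a + 2)) * edgeLen v (a + 1) := by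
  have hab : v (a + 1) ≠ v (a + 2) := hv.injective.ne (fne1 a)
  have := infDist_line (v a) (v (a + 2)) (v (a + 1)) hab
  rw [altLen, Set.pair_comm, this]
  congr 1
  · rw [ang, f21, f22]
  · rw [edgeLen, f11, f12, dist_comm]

lemma ls_cyc {v : Fin 3 → E2} (hv : AffineIndependent ℝ v) (a : Fin 3) :
    Real.sin (ang v (a + 1)) * edgeLen v (a + 2)
      = Real.sin (ang v (a + 2)) * edgeLen v (a + 1) := by
  rw [← alt_rep1 hv, ← alt_rep2 hv]

lemma alt_pos {v : Fin 3 → E2} (hv : AffineIndependent ℝ v) (a : Fin 3) :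
    0 < altLen v a := by
  rw [alt_rep1 hv]
  exact mul_pos (sin_ang_pos hv _) (edge_pos hv _)

lemma area_pos {v : Fin 3 → E2} (hv : AffineIndependent ℝ v) : 0 < triArea v := by
  have := edge_pos hv 0
  have := alt_pos hv 0
  rw [triArea]; positivity

lemma area_abs {v : Fin 3 → E2} (hv : AffineIndependent ℝ v) :
    ∀ i j k : Fin 3, i ≠ j → j ≠ k → i ≠ k →
      edgeLen v j * edgeLen v k * Real.sin (ang v i) = 2 * triArea v := by
  have L0 := ls_cyc hv 0
  have L1 := ls_cyc hv 1
  have L2 := ls_cyc hv 2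
  rw [show (0:Fin 3)+1 = 1 by decide, show (0:Fin 3)+2 = 2 by decide] at L0
  rw [show (1:Fin 3)+1 = 2 by decide, show (1:Fin 3)+2 = 0 by decide] at L1
  rw [show (2:Fin 3)+1 = 0 by decide, show (2:Fin 3)+2 = 1 by decide] at L2
  have A1 : edgeLen v 2 * edgeLen v 0 * Real.sin (ang v 1) = 2 * triArea v := by
    rw [triArea, alt_rep1 hv 0, show (0:Fin 3)+1 = 1 by decide,
      show (0:Fin 3)+2 = 2 by decide]
    ring
  have A0 : edgeLen v 1 * edgeLen v 2 * Real.sin (ang v 0) = 2 * triArea v := by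
    linear_combination edgeLen v 2 * L2 + A1
  have A2 : edgeLen v 0 * edgeLen v 1 * Real.sin (ang v 2) = 2 * triArea v := by
    linear_combination A1 - edgeLen v 0 * L0
  intro i j k hij hjk hik
  have hcases : (i=0∧j=1∧k=2)∨(i=0∧j=2∧k=1)∨(i=1∧j=0∧k=2)∨(i=1∧j=2∧k=0)
      ∨(i=2∧j=0∧k=1)∨(i=2∧j=1∧k=0) := by
    revert hij hjk hik; revert i j k; decide
  rcases hcases with ⟨rfl,rfl,rfl⟩|⟨rfl,rfl,rfl⟩|⟨rfl,rfl,rfl⟩|⟨rfl,rfl,rfl⟩|⟨rfl,rfl,rfl⟩|⟨rfl,rfl,rfl⟩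
  · linear_combination A0
  · linear_combination A0
  · linear_combination A1
  · linear_combination A1
  · linear_combination A2
  · linear_combination A2

lemma ls_abs {v : Fin 3 → E2} (hv : AffineIndependent ℝ v) :
    ∀ a b : Fin 3, edgeLen v a * Real.sin (ang v b) = edgeLen v b * Real.sin (ang v a) := by
  have L0 := ls_cyc hv 0
  have L1 := ls_cyc hv 1
  have L2 := ls_cyc hv 2
  rw [show (0:Fin 3)+1 = 1 by decide, show (0:Fin 3)+2 = 2 by decide] at L0
  rw [show (1:Fin 3)+1 = 2 by decide, show (1:Fin 3)+2 = 0 by decide] at L1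
  rw [show (2:Fin 3)+1 = 0 by decide, show (2:Fin 3)+2 = 1 by decide] at L2
  intro a b
  have htri := (by decide : ∀ x : Fin 3, x = 0 ∨ x = 1 ∨ x = 2)
  rcases htri a with rfl | rfl | rfl <;> rcases htri b with rfl | rfl | rfl
  · ring
  · linear_combination -L2
  · linear_combination L1
  · linear_combination L2
  · ring
  · linear_combination -L0
  · linear_combination -L1
  · linear_combination L0
  · ring

lemma edge_mul_alt {v : Fin 3 → E2} (hv : AffineIndependent ℝ v) (a : Fin 3) :
    edgeLen v a * altLen v a = 2 * triArea v := by
  rw [alt_rep1 hv]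
  have := area_abs hv (a + 1) (a + 2) a (by revert a; decide) (by revert a; decide)
    (by revert a; decide)
  linear_combination this

lemma fin3_cover : ∀ i j k : Fin 3, i ≠ j → j ≠ k → i ≠ k → ∀ a, a = i ∨ a = j ∨ a = k := by
  decide

lemma ang_nonneg (v : Fin 3 → E2) (a : Fin 3) : 0 ≤ ang v a :=
  EuclideanGeometry.angle_nonneg _ _ _

lemma sin_ang_lt {v v' : Fin 3 → E2} (a : Fin 3) (hT' : IsNonObtuse v')
    (h : ang v a < ang v' a) : Real.sin (ang v a) < Real.sin (ang v' a) := by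
  have hpi := Real.pi_pos
  have h1 := ang_nonneg v a
  have h2 := hT' a
  exact Real.strictMonoOn_sin ⟨by linarith, by linarith⟩ ⟨by linarith, by linarith⟩ h


end Aux

set_option maxHeartbeats 1000000 in
theorem stmt15 (v v' : Fin 3 → E2)
    (hv : AffineIndependent ℝ v) (hv' : AffineIndependent ℝ v')
    (hT : IsNonObtuse v) (hT' : IsNonObtuse v')
    (harea : triArea v = triArea v')
    (i j k : Fin 3) (hij : i ≠ j) (hjk : j ≠ k) (hik : i ≠ k)
    (hi : ang v' i < ang v i) (hj : ang v j < ang v' j) (hk : ang v' k < ang v k) :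
    Mdist v v' = edgeLen v' j / edgeLen v j ∧
    max (edgeLen v k / edgeLen v' k) (edgeLen v' k / edgeLen v k) < Mdist v v' := by
  have tri : ∀ x : Fin 3, x = 0 ∨ x = 1 ∨ x = 2 := by decide
  have cover : ∀ a : Fin 3, a = i ∨ a = j ∨ a = k := fin3_cover i j k hij hjk hik
  have hei := edge_pos hv i; have hej := edge_pos hv j; have hek := edge_pos hv k
  have he'i := edge_pos hv' i; have he'j := edge_pos hv' j; have he'k := edge_pos hv' k
  have hsi := sin_ang_pos hv i; have hsj := sin_ang_pos hv j; have hsk := sin_ang_pos hv k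
  have hs'i := sin_ang_pos hv' i; have hs'j := sin_ang_pos hv' j
  have hs'k := sin_ang_pos hv' k
  have hSi : Real.sin (ang v' i) < Real.sin (ang v i) := sin_ang_lt i hT hi
  have hSj : Real.sin (ang v j) < Real.sin (ang v' j) := sin_ang_lt j hT' hj
  have hSk : Real.sin (ang v' k) < Real.sin (ang v k) := sin_ang_lt k hT hk
  have EAi : edgeLen v j * edgeLen v k * Real.sin (ang v i)
      = edgeLen v' j * edgeLen v' k * Real.sin (ang v' i) := by
    rw [area_abs hv i j k hij hjk hik, area_abs hv' i j k hij hjk hik, harea]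
  have EAk : edgeLen v i * edgeLen v j * Real.sin (ang v k)
      = edgeLen v' i * edgeLen v' j * Real.sin (ang v' k) := by
    rw [area_abs hv k i j hik.symm hij hjk.symm, area_abs hv' k i j hik.symm hij hjk.symm,
      harea]
  -- numerator inequalities
  have n1 : edgeLen v' i * edgeLen v j < edgeLen v' j * edgeLen v i := by
    have l := ls_abs hv i j
    have l' := ls_abs hv' i j
    have hlt : Real.sin (ang v' i) * Real.sin (ang v j)
        < Real.sin (ang v' j) * Real.sin (ang v i) := by nlinarith
    have key : edgeLen v' i * edgeLen v j * (Real.sin (ang v' j) * Real.sin (ang v i))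
        = edgeLen v' j * edgeLen v i * (Real.sin (ang v' i) * Real.sin (ang v j)) := by
      linear_combination (edgeLen v j * Real.sin (ang v i)) * l'
        - (edgeLen v' j * Real.sin (ang v' i)) * l
    nlinarith [key, hlt, mul_pos hs'j hsi, mul_pos he'j hei]
  have n2 : edgeLen v' k * edgeLen v j < edgeLen v' j * edgeLen v k := by
    have l := ls_abs hv k j
    have l' := ls_abs hv' k j
    have hlt : Real.sin (ang v' k) * Real.sin (ang v j)
        < Real.sin (ang v' j) * Real.sin (ang v k) := by nlinarith
    have key : edgeLen v' k * edgeLen v j * (Real.sin (ang v' j) * Real.sin (ang v k))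
        = edgeLen v' j * edgeLen v k * (Real.sin (ang v' k) * Real.sin (ang v j)) := by
      linear_combination (edgeLen v j * Real.sin (ang v k)) * l'
        - (edgeLen v' j * Real.sin (ang v' k)) * l
    nlinarith [key, hlt, mul_pos hs'j hsk, mul_pos he'j hek]
  have n3 : edgeLen v i * edgeLen v j < edgeLen v' i * edgeLen v' j := by
    have h := mul_lt_mul_of_pos_left hSk (mul_pos hei hej)
    have h2 : edgeLen v i * edgeLen v j * Real.sin (ang v' k)
        < edgeLen v' i * edgeLen v' j * Real.sin (ang v' k) := by
      calc edgeLen v i * edgeLen v j * Real.sin (ang v' k)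
          < edgeLen v i * edgeLen v j * Real.sin (ang v k) := by
            exact mul_lt_mul_of_pos_left hSk (mul_pos hei hej)
        _ = edgeLen v' i * edgeLen v' j * Real.sin (ang v' k) := EAk
    exact lt_of_mul_lt_mul_right h2 hs'k.le
  have n4 : edgeLen v k * edgeLen v j < edgeLen v' k * edgeLen v' j := by
    have h2 : edgeLen v j * edgeLen v k * Real.sin (ang v' i)
        < edgeLen v' j * edgeLen v' k * Real.sin (ang v' i) := by
      calc edgeLen v j * edgeLen v k * Real.sin (ang v' i)
          < edgeLen v j * edgeLen v k * Real.sin (ang v i) := by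
            exact mul_lt_mul_of_pos_left hSi (mul_pos hej hek)
        _ = edgeLen v' j * edgeLen v' k * Real.sin (ang v' i) := EAi
    have h3 := lt_of_mul_lt_mul_right h2 hs'i.le
    calc edgeLen v k * edgeLen v j = edgeLen v j * edgeLen v k := mul_comm _ _
      _ < edgeLen v' j * edgeLen v' k := h3
      _ = edgeLen v' k * edgeLen v' j := mul_comm _ _
  have n5 : edgeLen v j < edgeLen v' j := by
    have hp : (edgeLen v i * edgeLen v j) * (edgeLen v' i * edgeLen v j)
        < (edgeLen v' i * edgeLen v' j) * (edgeLen v' j * edgeLen v i) :=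
      mul_lt_mul'' n3 n1 (by positivity) (by positivity)
    have h2 : edgeLen v j ^ 2 < edgeLen v' j ^ 2 := by
      nlinarith [hp, mul_pos hei he'i]
    nlinarith [h2, hej, he'j]
  -- altitude ratios
  have altRatio : ∀ a : Fin 3, altLen v' a / altLen v a = edgeLen v a / edgeLen v' a := by
    intro a
    have h1 : altLen v a = 2 * triArea v / edgeLen v a := by
      rw [eq_div_iff (edge_pos hv a).ne']
      linear_combination edge_mul_alt hv a
    have h2 : altLen v' a = 2 * triArea v / edgeLen v' a := by
      rw [eq_div_iff (edge_pos hv' a).ne', harea]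
      linear_combination edge_mul_alt hv' a
    rw [h1, h2]
    have hS := (area_pos hv).ne'
    have ha := (edge_pos hv a).ne'
    have ha' := (edge_pos hv' a).ne'
    field_simp
  have hXi : edgeLen v' i / edgeLen v i < edgeLen v' j / edgeLen v j :=
    (div_lt_div_iff₀ hei hej).2 n1
  have hXk : edgeLen v' k / edgeLen v k < edgeLen v' j / edgeLen v j :=
    (div_lt_div_iff₀ hek hej).2 n2
  have hYi : edgeLen v i / edgeLen v' i < edgeLen v' j / edgeLen v j :=
    (div_lt_div_iff₀ he'i hej).2 (lt_of_lt_of_eq n3 (mul_comm _ _))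
  have hYk : edgeLen v k / edgeLen v' k < edgeLen v' j / edgeLen v j :=
    (div_lt_div_iff₀ he'k hej).2 (lt_of_lt_of_eq n4 (mul_comm _ _))
  have hYj : edgeLen v j / edgeLen v' j < edgeLen v' j / edgeLen v j :=
    (div_lt_div_iff₀ he'j hej).2 (mul_lt_mul'' n5 n5 hej.le hej.le)
  have hEdgeLe : ∀ a : Fin 3, edgeLen v' a / edgeLen v a ≤ edgeLen v' j / edgeLen v j := by
    intro a
    rcases cover a with rfl | rfl | rfl
    · exact hXi.le
    · exact le_refl _
    · exact hXk.le
  have hAltLe : ∀ a : Fin 3, altLen v' a / altLen v a ≤ edgeLen v' j / edgeLen v j := by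
    intro a
    rw [altRatio a]
    rcases cover a with rfl | rfl | rfl
    · exact hYi.le
    · exact hYj.le
    · exact hYk.le
  have hub : Mdist v v' ≤ edgeLen v' j / edgeLen v j :=
    max_le (max_le (max_le (hEdgeLe 0) (hEdgeLe 1)) (hEdgeLe 2))
      (max_le (max_le (hAltLe 0) (hAltLe 1)) (hAltLe 2))
  have hlb : ∀ a : Fin 3, edgeLen v' a / edgeLen v a ≤ Mdist v v' := by
    intro a
    rcases tri a with rfl | rfl | rfl
    · exact le_max_of_le_left (le_max_of_le_left (le_max_left _ _))
    · exact le_max_of_le_left (le_max_of_le_left (le_max_right _ _))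
    · exact le_max_of_le_left (le_max_right _ _)
  have hM : Mdist v v' = edgeLen v' j / edgeLen v j := le_antisymm hub (hlb j)
  refine ⟨hM, ?_⟩
  rw [hM]
  exact max_lt hYk hXk
end
end

section
/- Let T (with vertices v₁, v₂, v₃) and T' (with vertices v'₁, v'₂, v'₃) be non-obtuse labeled triangles in the Euclidean plane such that v₁ = v'₁, v₂ = v'₂, and T is contained in T' (the convex hull of {v₁,v₂,v₃} is a subset of the convex hull of {v'₁,v'₂,v'₃}). Then M(T,T') = ‖h'₃‖/‖h₃‖. -/
open Metric Set ENNReal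
open scoped RealInnerProductSpace

noncomputable section

private lemma sqle {x z : ℝ} (hx : 0 ≤ x) (hz : 0 ≤ z) (h : x^2 ≤ z^2) : x ≤ z := by
  nlinarith

private lemma sqeq {x z : ℝ} (hx : 0 ≤ x) (hz : 0 ≤ z) (h : x^2 = z^2) : x = z := by
  nlinarith [sq_nonneg (x - z), sq_nonneg (x + z)]

private lemma core2 (cc s n b g : ℝ) (hcc : 0 < cc) (hs : 0 ≤ s) (hsc : s ≤ cc)
    (hb : 0 ≤ b) (hg : 0 < g) (hbg : b + g ≤ 1)
    (hstar : cc * (b*cc + g*s) - (b*cc + g*s)^2 ≤ g^2 * (cc*n - s^2)) :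
    b^2*cc + 2*b*g*s + g^2*n ≤ n := by
  have hg1 : g ≤ 1 := by linarith
  have hgg : g^2 ≤ 1 := by nlinarith
  have h1 : 0 ≤ (cc - s) * b * cc * (1 - b - g^2) := by
    have : 0 ≤ 1 - b - g^2 := by nlinarith
    have h2 : (0:ℝ) ≤ (cc - s) * b := mul_nonneg (by linarith) hb
    have := mul_nonneg (mul_nonneg h2 hcc.le) this
    linarith
  have h2 : 0 ≤ s * (1 - b - g) * (b + g + g^2) :=
    mul_nonneg (mul_nonneg hs (by linarith)) (by positivity)
  have hS2 : 0 ≤ g^2*(s^2 - (b*cc+g*s)^2) + (1-g^2)*(b*cc+g*s)*(cc - (b*cc+g*s)) := by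
    have hA : g^2*(s^2 - (b*cc+g*s)^2) + (1-g^2)*(b*cc+g*s)*(cc - (b*cc+g*s))
        = (cc - s) * b * cc * (1 - b - g^2) * cc⁻¹ * cc
          + s * (1 - b - g) * (b + g + g^2) * cc := by
      field_simp
      ring
    rw [hA]
    have := mul_nonneg (mul_nonneg h1 (by positivity : (0:ℝ) ≤ cc⁻¹)) hcc.le
    nlinarith [mul_nonneg h2 hcc.le]
  have hB : g^2*cc*(n - (b^2*cc + 2*b*g*s + g^2*n))
      = g^2*(s^2 - (b*cc+g*s)^2) + (1-g^2)*(b*cc+g*s)*(cc - (b*cc+g*s))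
        + (1-g^2)*(g^2*(cc*n - s^2) - (cc*(b*cc+g*s) - (b*cc+g*s)^2)) := by
    ring
  have hpos : 0 < g^2*cc := by positivity
  nlinarith [mul_nonneg (by linarith : (0:ℝ) ≤ 1 - g^2)
    (by linarith : (0:ℝ) ≤ g^2*(cc*n - s^2) - (cc*(b*cc+g*s) - (b*cc+g*s)^2))]

private lemma infDist_line_sq (p q r : E2) (hqr : q ≠ r) :
    Metric.infDist p (affineSpan ℝ ({q, r} : Set E2) : Set E2) ^ 2 * ‖r - q‖^2
      = ‖p - q‖^2 * ‖r - q‖^2 - ⟪p - q, r - q⟫^2 := by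
  have hd : r - q ≠ 0 := sub_ne_zero.2 (Ne.symm hqr)
  have hm : (0:ℝ) < ‖r - q‖^2 := pow_pos (norm_pos_iff.2 hd) 2
  set I : ℝ := ⟪p - q, r - q⟫ with hI
  set t0 : ℝ := I / ‖r - q‖^2 with ht0
  set F : E2 := t0 • (r - q) + q with hF
  have hFmem : F ∈ (affineSpan ℝ ({q, r} : Set E2) : Set E2) := by
    have := smul_vsub_vadd_mem_affineSpan_pair t0 q r
    simpa [vsub_eq_sub, vadd_eq_add] using this
  have hdistF : dist p F ^2 = ‖p - q‖^2 - I^2 / ‖r - q‖^2 := by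
    rw [dist_eq_norm]
    have h1 : p - F = (p - q) - t0 • (r - q) := by rw [hF]; abel
    rw [h1, norm_sub_sq_real, real_inner_smul_right, norm_smul, mul_pow, Real.norm_eq_abs,
      sq_abs, ← hI, ht0]
    field_simp
    ring
  have hlow : ∀ z ∈ (affineSpan ℝ ({q, r} : Set E2) : Set E2), dist p F ≤ dist p z := by
    intro z hz
    have hz' : (z - q) +ᵥ q ∈ affineSpan ℝ ({q, r} : Set E2) := by
      simpa [vadd_eq_add, sub_add_cancel] using hz
    obtain ⟨t, ht⟩ := vadd_left_mem_affineSpan_pair.1 hz'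
    have hzq : z - q = t • (r - q) := by rw [← ht]; simp [vsub_eq_sub]
    have hdz : dist p z ^2 = ‖p - q‖^2 - 2*t*I + t^2*‖r - q‖^2 := by
      rw [dist_eq_norm]
      have h1 : p - z = (p - q) - t • (r - q) := by
        have : z = t • (r - q) + q := by rw [← hzq]; abel
        rw [this]; abel
      rw [h1, norm_sub_sq_real, real_inner_smul_right, norm_smul, mul_pow, Real.norm_eq_abs,
        sq_abs, ← hI]
      ring
    apply sqle dist_nonneg dist_nonneg
    rw [hdistF, hdz]
    have key : 0 ≤ (t*‖r - q‖^2 - I)^2 := sq_nonneg _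
    have h2 : (t*‖r - q‖^2 - I)^2 = ‖r-q‖^2 * ((‖p - q‖^2 - 2*t*I + t^2*‖r - q‖^2) - (‖p - q‖^2 - I^2 / ‖r - q‖^2)) := by
      field_simp
      ring
    nlinarith [hm]
  have hmain : Metric.infDist p (affineSpan ℝ ({q, r} : Set E2) : Set E2) = dist p F := by
    refine le_antisymm (Metric.infDist_le_dist_of_mem hFmem) ?_
    by_contra hlt
    push_neg at hlt
    obtain ⟨z, hzmem, hzlt⟩ := (Metric.infDist_lt_iff ⟨F, hFmem⟩).1 hlt
    exact absurd hzlt (not_lt.2 (hlow z hzmem))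
  rw [hmain, hdistF]
  field_simp

private lemma inner_nonneg_of_angle_le (p1 p2 p3 : E2)
    (h : EuclideanGeometry.angle p1 p2 p3 ≤ Real.pi/2) :
    0 ≤ ⟪p1 - p2, p3 - p2⟫ := by
  have hdef : EuclideanGeometry.angle p1 p2 p3
      = InnerProductGeometry.angle (p1 - p2) (p3 - p2) := by
    rw [EuclideanGeometry.angle]
    norm_num [vsub_eq_sub]
  rw [hdef] at h
  have h0 := InnerProductGeometry.angle_nonneg (p1 - p2) (p3 - p2)
  have hcos : 0 ≤ Real.cos (InnerProductGeometry.angle (p1 - p2) (p3 - p2)) :=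
    Real.cos_nonneg_of_mem_Icc ⟨by linarith [Real.pi_pos], h⟩
  have hmul := InnerProductGeometry.cos_angle_mul_norm_mul_norm (p1 - p2) (p3 - p2)
  rw [← hmul]
  positivity

private lemma notMem_line (v : Fin 3 → E2) (hv : AffineIndependent ℝ v) :
    v 2 ∉ (affineSpan ℝ ({v 0, v 1} : Set E2) : Set E2) := by
  intro hmem
  have hcol : Collinear ℝ ({v 2, v 0, v 1} : Set E2) :=
    collinear_insert_of_mem_affineSpan_pair hmem
  have hsub : Set.range v ⊆ ({v 2, v 0, v 1} : Set E2) := by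
    rintro x ⟨i, rfl⟩
    fin_cases i <;> simp
  exact (affineIndependent_iff_not_collinear.1 hv) (hcol.subset hsub)

private lemma altLen_pos_aux (v : Fin 3 → E2) (hv : AffineIndependent ℝ v) :
    0 < Metric.infDist (v 2) (affineSpan ℝ ({v 0, v 1} : Set E2) : Set E2) := by
  have hclosed : IsClosed (affineSpan ℝ ({v 0, v 1} : Set E2) : Set E2) :=
    (affineSpan ℝ ({v 0, v 1} : Set E2)).closed_of_finiteDimensional
  have hne : (affineSpan ℝ ({v 0, v 1} : Set E2) : Set E2).Nonempty :=
    ⟨v 0, left_mem_affineSpan_pair ℝ (v 0) (v 1)⟩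
  exact (hclosed.notMem_iff_infDist_pos hne).1 (notMem_line v hv)

private lemma tri_facts (v : Fin 3 → E2) (hv : AffineIndependent ℝ v) :
    edgeLen v 2 = dist (v 0) (v 1) ∧
    (edgeLen v 2)^2 = ⟪v 1 - v 0, v 1 - v 0⟫ ∧
    (edgeLen v 0)^2 = ⟪v 1 - v 0, v 1 - v 0⟫ - 2*⟪v 1 - v 0, v 2 - v 0⟫
        + ⟪v 2 - v 0, v 2 - v 0⟫ ∧
    (edgeLen v 1)^2 = ⟪v 2 - v 0, v 2 - v 0⟫ ∧
    (altLen v 2)^2 * ⟪v 1 - v 0, v 1 - v 0⟫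
      = ⟪v 1 - v 0, v 1 - v 0⟫*⟪v 2 - v 0, v 2 - v 0⟫ - ⟪v 1 - v 0, v 2 - v 0⟫^2 ∧
    (altLen v 0)^2 * (edgeLen v 0)^2
      = ⟪v 1 - v 0, v 1 - v 0⟫*⟪v 2 - v 0, v 2 - v 0⟫ - ⟪v 1 - v 0, v 2 - v 0⟫^2 ∧
    (altLen v 1)^2 * (edgeLen v 1)^2
      = ⟪v 1 - v 0, v 1 - v 0⟫*⟪v 2 - v 0, v 2 - v 0⟫ - ⟪v 1 - v 0, v 2 - v 0⟫^2 ∧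
    0 < edgeLen v 2 ∧ 0 < edgeLen v 0 ∧ 0 < edgeLen v 1 ∧
    0 < altLen v 2 ∧ 0 ≤ altLen v 0 ∧ 0 ≤ altLen v 1 := by
  have hne01 : v 0 ≠ v 1 := fun h => absurd (hv.injective h) (by decide)
  have hne12 : v 1 ≠ v 2 := fun h => absurd (hv.injective h) (by decide)
  have hne20 : v 2 ≠ v 0 := fun h => absurd (hv.injective h) (by decide)
  have i21 : (2 + 1 : Fin 3) = 0 := by decide
  have i22 : (2 + 2 : Fin 3) = 1 := by decide
  have i01 : (0 + 1 : Fin 3) = 1 := by decide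
  have i02 : (0 + 2 : Fin 3) = 2 := by decide
  have i11 : (1 + 1 : Fin 3) = 2 := by decide
  have i12 : (1 + 2 : Fin 3) = 0 := by decide
  have he2 : edgeLen v 2 = dist (v 0) (v 1) := by rw [edgeLen, i21, i22]
  have he0 : edgeLen v 0 = dist (v 1) (v 2) := by rw [edgeLen, i01, i02]
  have he1 : edgeLen v 1 = dist (v 2) (v 0) := by rw [edgeLen, i11, i12]
  have ha2 : altLen v 2 = Metric.infDist (v 2) (affineSpan ℝ ({v 0, v 1} : Set E2) : Set E2) := by
    rw [altLen, i21, i22]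
  have ha0 : altLen v 0 = Metric.infDist (v 0) (affineSpan ℝ ({v 1, v 2} : Set E2) : Set E2) := by
    rw [altLen, i01, i02]
  have ha1 : altLen v 1 = Metric.infDist (v 1) (affineSpan ℝ ({v 2, v 0} : Set E2) : Set E2) := by
    rw [altLen, i11, i12]
  -- squared edge formulas
  have q2 : (edgeLen v 2)^2 = ⟪v 1 - v 0, v 1 - v 0⟫ := by
    rw [he2, dist_comm, dist_eq_norm]
    exact (real_inner_self_eq_norm_sq _).symm
  have q0 : (edgeLen v 0)^2 = ⟪v 1 - v 0, v 1 - v 0⟫ - 2*⟪v 1 - v 0, v 2 - v 0⟫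
      + ⟪v 2 - v 0, v 2 - v 0⟫ := by
    rw [he0, dist_eq_norm, show v 1 - v 2 = (v 1 - v 0) - (v 2 - v 0) by abel,
      norm_sub_sq_real, ← real_inner_self_eq_norm_sq, ← real_inner_self_eq_norm_sq]
  have q1 : (edgeLen v 1)^2 = ⟪v 2 - v 0, v 2 - v 0⟫ := by
    rw [he1, dist_eq_norm]
    exact (real_inner_self_eq_norm_sq _).symm
  -- altitude formulas
  have r2 : (altLen v 2)^2 * ⟪v 1 - v 0, v 1 - v 0⟫
      = ⟪v 1 - v 0, v 1 - v 0⟫*⟪v 2 - v 0, v 2 - v 0⟫ - ⟪v 1 - v 0, v 2 - v 0⟫^2 := by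
    have h := infDist_line_sq (v 2) (v 0) (v 1) hne01
    rw [← real_inner_self_eq_norm_sq, ← real_inner_self_eq_norm_sq,
      real_inner_comm (v 1 - v 0) (v 2 - v 0), ← ha2] at h
    linear_combination h
  have r0 : (altLen v 0)^2 * (edgeLen v 0)^2
      = ⟪v 1 - v 0, v 1 - v 0⟫*⟪v 2 - v 0, v 2 - v 0⟫ - ⟪v 1 - v 0, v 2 - v 0⟫^2 := by
    have h := infDist_line_sq (v 0) (v 1) (v 2) hne12
    have n1 : ‖v 2 - v 1‖^2 = (edgeLen v 0)^2 := by
      rw [he0, dist_eq_norm, norm_sub_rev (v 1) (v 2)]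
    have n2 : ‖v 0 - v 1‖^2 = ⟪v 1 - v 0, v 1 - v 0⟫ := by
      rw [norm_sub_rev, ← real_inner_self_eq_norm_sq]
    have n3 : ⟪v 0 - v 1, v 2 - v 1⟫ = ⟪v 1 - v 0, v 1 - v 0⟫ - ⟪v 1 - v 0, v 2 - v 0⟫ := by
      rw [show v 0 - v 1 = -(v 1 - v 0) by abel,
        show v 2 - v 1 = (v 2 - v 0) - (v 1 - v 0) by abel,
        inner_neg_left, inner_sub_right]
      ring
    rw [n1, n2, n3, ← ha0] at h
    linear_combination h + ⟪v 1 - v 0, v 1 - v 0⟫ * q0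
  have r1 : (altLen v 1)^2 * (edgeLen v 1)^2
      = ⟪v 1 - v 0, v 1 - v 0⟫*⟪v 2 - v 0, v 2 - v 0⟫ - ⟪v 1 - v 0, v 2 - v 0⟫^2 := by
    have h := infDist_line_sq (v 1) (v 2) (v 0) hne20
    have n1 : ‖v 0 - v 2‖^2 = (edgeLen v 1)^2 := by
      rw [he1, dist_eq_norm, norm_sub_rev (v 2) (v 0)]
    have n2 : ‖v 1 - v 2‖^2 = (edgeLen v 0)^2 := by rw [he0, dist_eq_norm]
    have n3 : ⟪v 1 - v 2, v 0 - v 2⟫ = ⟪v 2 - v 0, v 2 - v 0⟫ - ⟪v 1 - v 0, v 2 - v 0⟫ := by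
      rw [show v 1 - v 2 = (v 1 - v 0) - (v 2 - v 0) by abel,
        show v 0 - v 2 = -(v 2 - v 0) by abel,
        inner_neg_right, inner_sub_left]
      ring
    rw [n1, n2, n3, ← ha1] at h
    linear_combination h + (edgeLen v 1)^2 * q0 + (⟪v 1 - v 0, v 1 - v 0⟫ -
      2*⟪v 1 - v 0, v 2 - v 0⟫ + ⟪v 2 - v 0, v 2 - v 0⟫) * q1
  refine ⟨he2, q2, q0, q1, r2, r0, r1, ?_, ?_, ?_, ?_, ?_, ?_⟩
  · rw [he2]; exact dist_pos.2 hne01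
  · rw [he0]; exact dist_pos.2 hne12
  · rw [he1]; exact dist_pos.2 hne20
  · rw [ha2]; exact altLen_pos_aux v hv
  · rw [ha0]; exact Metric.infDist_nonneg
  · rw [ha1]; exact Metric.infDist_nonneg

private lemma exists_coeffs (v' : Fin 3 → E2) {x : E2} (hx : x ∈ convexHull ℝ (Set.range v')) :
    ∃ b g : ℝ, 0 ≤ b ∧ 0 ≤ g ∧ b + g ≤ 1 ∧
      x - v' 0 = b • (v' 1 - v' 0) + g • (v' 2 - v' 0) := by
  rw [convexHull_range_eq_exists_affineCombination] at hx
  obtain ⟨t, W0, hW0nn, hW0sum, hWeq⟩ := hx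
  rw [Finset.affineCombination_indicator_subset W0 v' t.subset_univ] at hWeq
  set W : Fin 3 → ℝ := Set.indicator ↑t W0 with hW
  have hWsum : ∑ i, W i = 1 := by
    rw [hW, Finset.sum_indicator_subset W0 t.subset_univ]
    exact hW0sum
  have hWnn : ∀ i, 0 ≤ W i := by
    intro i
    by_cases h : i ∈ (↑t : Set (Fin 3))
    · simpa [hW, Set.indicator_of_mem h] using hW0nn i h
    · simp [hW, Set.indicator_of_notMem h]
  have hcomb : ∑ i, W i • v' i = x := by
    rw [← hWeq, affineCombination_eq_centerMass hWsum, Finset.centerMass_eq_of_sum_1 _ _ hWsum]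
  have hsum3' : W 0 + W 1 + W 2 = 1 := by rw [← Fin.sum_univ_three W]; exact hWsum
  refine ⟨W 1, W 2, hWnn 1, hWnn 2, by linarith [hWnn 0], ?_⟩
  have hsum3 : W 0 • v' 0 + W 1 • v' 1 + W 2 • v' 2 = x := by
    rw [← hcomb, Fin.sum_univ_three]
  have hW0' : W 0 = 1 - W 1 - W 2 := by linarith
  rw [← hsum3, hW0']
  module

private lemma final_core
    (c aa ab aa' ab' y y' p0 p1 q0 q1 cc ss nn iuw ww b g : ℝ)
    (hcpos : 0 < c) (haapos : 0 < aa) (habpos : 0 < ab) (haa'pos : 0 < aa') (hab'pos : 0 < ab')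
    (hypos : 0 < y) (hy'pos : 0 < y') (hp0 : 0 ≤ p0) (hp1 : 0 ≤ p1) (hq0 : 0 ≤ q0) (hq1 : 0 ≤ q1)
    (hc2 : c^2 = cc)
    (haa2 : aa^2 = cc - 2*iuw + ww) (hab2 : ab^2 = ww)
    (haa'2 : aa'^2 = cc - 2*ss + nn) (hab'2 : ab'^2 = nn)
    (hy2 : y^2*cc = cc*ww - iuw^2) (hy'2 : y'^2*cc = cc*nn - ss^2)
    (hp02 : p0^2*aa^2 = cc*ww - iuw^2) (hp12 : p1^2*ab^2 = cc*ww - iuw^2)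
    (hq02 : q0^2*aa'^2 = cc*nn - ss^2) (hq12 : q1^2*ab'^2 = cc*nn - ss^2)
    (hss0 : 0 ≤ ss) (hssc : ss ≤ cc)
    (hb : 0 ≤ b) (hg : 0 ≤ g) (hbg : b + g ≤ 1)
    (hiuw : iuw = b*cc + g*ss) (hww : ww = b^2*cc + 2*b*g*ss + g^2*nn)
    (hstar : iuw ≤ ww) :
    max (max (max (aa'/aa) (ab'/ab)) (c/c)) (max (max (q0/p0) (q1/p1)) (y'/y)) = y'/y := by
  have hccpos : 0 < cc := by rw [← hc2]; positivity
  have hKpos : 0 < cc*ww - iuw^2 := by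
    rw [← hy2]; exact mul_pos (pow_pos hypos 2) hccpos
  have hK'pos : 0 < cc*nn - ss^2 := by
    rw [← hy'2]; exact mul_pos (pow_pos hy'pos 2) hccpos
  have hKgK' : cc*ww - iuw^2 = g^2*(cc*nn - ss^2) := by rw [hiuw, hww]; ring
  have hgpos : 0 < g := by
    rcases hg.eq_or_lt with h | h
    · exfalso
      rw [← h] at hKgK'
      simp only [ne_eq, OfNat.ofNat_ne_zero, not_false_eq_true, zero_pow, zero_mul] at hKgK'
      linarith
    · exact h
  have hg1 : g ≤ 1 := by linarith
  have hstar2 : cc * (b*cc + g*ss) - (b*cc + g*ss)^2 ≤ g^2 * (cc*nn - ss^2) := by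
    rw [← hiuw, ← hKgK']
    have := mul_le_mul_of_nonneg_left hstar hccpos.le
    linarith
  -- b ≤ b'
  have hwwnn : ww ≤ nn := by
    have h := core2 cc ss nn b g hccpos hss0 hssc hb hgpos hbg hstar2
    rw [hww]; exact h
  -- a ≤ a'
  have haaww : cc - 2*iuw + ww ≤ cc - 2*ss + nn := by
    have e : (1-b-g)*cc + g*(cc-ss) = cc - iuw := by rw [hiuw]; ring
    have hstar3 : cc * ((1-b-g)*cc + g*(cc-ss)) - ((1-b-g)*cc + g*(cc-ss))^2
        ≤ g^2 * (cc*(cc - 2*ss + nn) - (cc-ss)^2) := by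
      rw [e, show g^2*(cc*(cc - 2*ss + nn) - (cc-ss)^2) = g^2*(cc*nn - ss^2) by ring, ← hKgK']
      have h1 := mul_le_mul_of_nonneg_left hstar hccpos.le
      have h2 : cc*(cc - iuw) - (cc - iuw)^2 = cc*iuw - iuw^2 := by ring
      linarith
    have h := core2 cc (cc - ss) (cc - 2*ss + nn) (1 - b - g) g hccpos (by linarith)
      (by linarith) (by linarith) hgpos (by linarith) hstar3
    have e3 : (1-b-g)^2*cc + 2*(1-b-g)*g*(cc-ss) + g^2*(cc-2*ss+nn) = cc - 2*iuw + ww := by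
      rw [hiuw, hww]; ring
    linarith [e3 ▸ h]
  have h4 : g^2*nn ≤ ww := by
    rw [hww]
    have h1 := mul_nonneg (mul_nonneg hb hg) hss0
    have h2 := mul_nonneg (mul_nonneg hb hb) hccpos.le
    linarith [h1, h2]
  have h5 : g^2*(cc - 2*ss + nn) ≤ cc - 2*iuw + ww := by
    have e : cc - 2*iuw + ww - g^2*(cc - 2*ss + nn) = (1-b-g)*((1-b+g)*cc - 2*g*ss) := by
      rw [hiuw, hww]; ring
    have inner : 0 ≤ (1-b+g)*cc - 2*g*ss := by
      have hA := mul_le_mul_of_nonneg_left hssc (by positivity : (0:ℝ) ≤ 2*g)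
      have hB := mul_nonneg (by linarith : (0:ℝ) ≤ 1-b-g) hccpos.le
      linarith [hA, hB]
    have hC := mul_nonneg (by linarith : (0:ℝ) ≤ 1-b-g) inner
    linarith [e ▸ hC]
  -- order facts
  have hyy' : y ≤ y' := by
    apply sqle hypos.le hy'pos.le
    have hgg : g^2 ≤ 1 := by
      have h2 := mul_le_mul_of_nonneg_left hg1 hg
      have h3 := mul_le_mul_of_nonneg_left hg1 zero_le_one
      calc g^2 = g*g := sq g
        _ ≤ g*1 := h2
        _ ≤ 1 := by linarith
    have h1 : y^2*cc ≤ y'^2*cc := by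
      rw [hy2, hy'2, hKgK']
      have := mul_le_mul_of_nonneg_right hgg hK'pos.le
      linarith
    exact le_of_mul_le_mul_right h1 hccpos
  have haA : aa ≤ aa' := sqle haapos.le haa'pos.le (by rw [haa2, haa'2]; exact haaww)
  have habb : ab ≤ ab' := sqle habpos.le hab'pos.le (by rw [hab2, hab'2]; exact hwwnn)
  have h5' : g^2*aa'^2 ≤ aa^2 := by rw [haa2, haa'2]; exact h5
  have h4' : g^2*ab'^2 ≤ ab^2 := by rw [hab2, hab'2]; exact h4
  have hra : aa'*y ≤ aa*y' := by
    apply sqle (by positivity) (by positivity)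
    have key : (aa'*y)^2*cc ≤ (aa*y')^2*cc := by
      calc (aa'*y)^2*cc = aa'^2*(y^2*cc) := by ring
        _ = aa'^2*(g^2*(cc*nn - ss^2)) := by rw [hy2, hKgK']
        _ = (g^2*aa'^2)*(cc*nn - ss^2) := by ring
        _ ≤ aa^2*(cc*nn - ss^2) := mul_le_mul_of_nonneg_right h5' hK'pos.le
        _ = aa^2*(y'^2*cc) := by rw [hy'2]
        _ = (aa*y')^2*cc := by ring
    exact le_of_mul_le_mul_right key hccpos
  have hrb : ab'*y ≤ ab*y' := by
    apply sqle (by positivity) (by positivity)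
    have key : (ab'*y)^2*cc ≤ (ab*y')^2*cc := by
      calc (ab'*y)^2*cc = ab'^2*(y^2*cc) := by ring
        _ = ab'^2*(g^2*(cc*nn - ss^2)) := by rw [hy2, hKgK']
        _ = (g^2*ab'^2)*(cc*nn - ss^2) := by ring
        _ ≤ ab^2*(cc*nn - ss^2) := mul_le_mul_of_nonneg_right h4' hK'pos.le
        _ = ab^2*(y'^2*cc) := by rw [hy'2]
        _ = (ab*y')^2*cc := by ring
    exact le_of_mul_le_mul_right key hccpos
  -- product equalities
  have hPA : p0*aa = y*c := by
    apply sqeq (by positivity) (by positivity)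
    rw [mul_pow, mul_pow, hp02, hc2]
    linear_combination -hy2
  have hPB : p1*ab = y*c := by
    apply sqeq (by positivity) (by positivity)
    rw [mul_pow, mul_pow, hp12, hc2]
    linear_combination -hy2
  have hQA : q0*aa' = y'*c := by
    apply sqeq (by positivity) (by positivity)
    rw [mul_pow, mul_pow, hq02, hc2]
    linear_combination -hy'2
  have hQB : q1*ab' = y'*c := by
    apply sqeq (by positivity) (by positivity)
    rw [mul_pow, mul_pow, hq12, hc2]
    linear_combination -hy'2
  have hp0pos : 0 < p0 := by
    rcases hp0.eq_or_lt with h | h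
    · exfalso
      have h1 : 0 < y*c := mul_pos hypos hcpos
      rw [← hPA, ← h, zero_mul] at h1
      exact lt_irrefl 0 h1
    · exact h
  have hp1pos : 0 < p1 := by
    rcases hp1.eq_or_lt with h | h
    · exfalso
      have h1 : 0 < y*c := mul_pos hypos hcpos
      rw [← hPB, ← h, zero_mul] at h1
      exact lt_irrefl 0 h1
    · exact h
  -- six bounds
  have b1 : aa'/aa ≤ y'/y := (div_le_div_iff₀ haapos hypos).2 (by linarith [hra])
  have b2 : ab'/ab ≤ y'/y := (div_le_div_iff₀ habpos hypos).2 (by linarith [hrb])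
  have b3 : c/c ≤ y'/y := by
    rw [div_self hcpos.ne', le_div_iff₀ hypos, one_mul]; exact hyy'
  have b4 : q0/p0 ≤ y'/y := by
    apply (div_le_div_iff₀ hp0pos hypos).2
    have key : q0*y*(aa*aa') ≤ y'*p0*(aa*aa') := by
      calc q0*y*(aa*aa') = (q0*aa')*y*aa := by ring
        _ = (y'*c)*y*aa := by rw [hQA]
        _ ≤ (y'*c)*y*aa' := by
              have hnn : (0:ℝ) ≤ y'*c*y := by positivity
              have := mul_le_mul_of_nonneg_left haA hnn
              linarith [this]
        _ = y'*(y*c)*aa' := by ring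
        _ = y'*(p0*aa)*aa' := by rw [hPA]
        _ = y'*p0*(aa*aa') := by ring
    exact le_of_mul_le_mul_right key (by positivity)
  have b5 : q1/p1 ≤ y'/y := by
    apply (div_le_div_iff₀ hp1pos hypos).2
    have key : q1*y*(ab*ab') ≤ y'*p1*(ab*ab') := by
      calc q1*y*(ab*ab') = (q1*ab')*y*ab := by ring
        _ = (y'*c)*y*ab := by rw [hQB]
        _ ≤ (y'*c)*y*ab' := by
              have hnn : (0:ℝ) ≤ y'*c*y := by positivity
              have := mul_le_mul_of_nonneg_left habb hnn
              linarith [this]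
        _ = y'*(y*c)*ab' := by ring
        _ = y'*(p1*ab)*ab' := by rw [hPB]
        _ = y'*p1*(ab*ab') := by ring
    exact le_of_mul_le_mul_right key (by positivity)
  refine le_antisymm ?_ ?_
  · exact max_le (max_le (max_le b1 b2) b3) (max_le (max_le b4 b5) le_rfl)
  · exact le_max_of_le_right (le_max_right _ _)

theorem stmt16 (v v' : Fin 3 → E2)
    (hv : AffineIndependent ℝ v) (hv' : AffineIndependent ℝ v')
    (hT : IsNonObtuse v) (hT' : IsNonObtuse v')
    (h1 : v 0 = v' 0) (h2 : v 1 = v' 1)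
    (hsub : Tri v ⊆ Tri v') :
    Mdist v v' = altLen v' 2 / altLen v 2 := by
  have i01 : (0 + 1 : Fin 3) = 1 := by decide
  have i02 : (0 + 2 : Fin 3) = 2 := by decide
  have i11 : (1 + 1 : Fin 3) = 2 := by decide
  have i12 : (1 + 2 : Fin 3) = 0 := by decide
  have i21 : (2 + 1 : Fin 3) = 0 := by decide
  have i22 : (2 + 2 : Fin 3) = 1 := by decide
  obtain ⟨tce, tq2, tq0, tq1, tr2, tr0, tr1, tp2, tp0, tp1, ty, tn0, tn1⟩ := tri_facts v hv
  obtain ⟨sce, sq2, sq0, sq1, sr2, sr0, sr1, sp2, sp0, sp1, sy, sn0, sn1⟩ := tri_facts v' hv'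
  simp only [← h1, ← h2] at sq2 sq0 sq1 sr2 sr0 sr1
  -- convex decomposition
  have hxC : v 2 ∈ convexHull ℝ (Set.range v') := hsub (subset_convexHull ℝ _ ⟨2, rfl⟩)
  obtain ⟨b, g, hb, hg, hbg, hdec⟩ := exists_coeffs v' hxC
  rw [← h1, ← h2] at hdec
  -- scalar identities
  have hiuw : ⟪v 1 - v 0, v 2 - v 0⟫
      = b*⟪v 1 - v 0, v 1 - v 0⟫ + g*⟪v 1 - v 0, v' 2 - v 0⟫ := by
    rw [hdec, inner_add_right, real_inner_smul_right, real_inner_smul_right]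
  have hww : ⟪v 2 - v 0, v 2 - v 0⟫ = b^2*⟪v 1 - v 0, v 1 - v 0⟫
      + 2*b*g*⟪v 1 - v 0, v' 2 - v 0⟫ + g^2*⟪v' 2 - v 0, v' 2 - v 0⟫ := by
    rw [hdec]
    simp only [inner_add_left, inner_add_right, real_inner_smul_left, real_inner_smul_right]
    rw [real_inner_comm (v' 2 - v 0) (v 1 - v 0)]
    ring
  -- angle facts
  have hang0 : 0 ≤ ⟪v 1 - v 0, v' 2 - v 0⟫ := by
    have ha := hT' 0
    rw [ang, i01, i02] at ha
    have h := inner_nonneg_of_angle_le (v' 1) (v' 0) (v' 2) ha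
    rw [← h1, ← h2] at h
    exact h
  have hssc : ⟪v 1 - v 0, v' 2 - v 0⟫ ≤ ⟪v 1 - v 0, v 1 - v 0⟫ := by
    have ha := hT' 1
    rw [ang, i11, i12] at ha
    have h := inner_nonneg_of_angle_le (v' 2) (v' 1) (v' 0) ha
    rw [← h1, ← h2] at h
    have e : ⟪v' 2 - v 1, v 0 - v 1⟫
        = ⟪v 1 - v 0, v 1 - v 0⟫ - ⟪v 1 - v 0, v' 2 - v 0⟫ := by
      rw [show v' 2 - v 1 = (v' 2 - v 0) - (v 1 - v 0) by abel,
        show v 0 - v 1 = -(v 1 - v 0) by abel,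
        inner_neg_right, inner_sub_left, real_inner_comm (v' 2 - v 0) (v 1 - v 0)]
      ring
    rw [e] at h
    linarith
  have hstar : ⟪v 1 - v 0, v 2 - v 0⟫ ≤ ⟪v 2 - v 0, v 2 - v 0⟫ := by
    have ha := hT 2
    rw [ang, i21, i22] at ha
    have h := inner_nonneg_of_angle_le (v 0) (v 2) (v 1) ha
    have e : ⟪v 0 - v 2, v 1 - v 2⟫
        = ⟪v 2 - v 0, v 2 - v 0⟫ - ⟪v 1 - v 0, v 2 - v 0⟫ := by
      rw [show v 0 - v 2 = -(v 2 - v 0) by abel,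
        show v 1 - v 2 = (v 1 - v 0) - (v 2 - v 0) by abel,
        inner_neg_left, inner_sub_right, real_inner_comm (v 2 - v 0) (v 1 - v 0)]
      ring
    rw [e] at h
    linarith
  have key := final_core (edgeLen v 2) (edgeLen v 0) (edgeLen v 1) (edgeLen v' 0) (edgeLen v' 1)
    (altLen v 2) (altLen v' 2) (altLen v 0) (altLen v 1) (altLen v' 0) (altLen v' 1)
    ⟪v 1 - v 0, v 1 - v 0⟫ ⟪v 1 - v 0, v' 2 - v 0⟫ ⟪v' 2 - v 0, v' 2 - v 0⟫
    ⟪v 1 - v 0, v 2 - v 0⟫ ⟪v 2 - v 0, v 2 - v 0⟫ b g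
    tp2 tp0 tp1 sp0 sp1 ty sy tn0 tn1 sn0 sn1
    tq2 tq0 tq1 sq0 sq1 tr2 sr2 tr0 tr1 sr0 sr1
    hang0 hssc hb hg hbg hiuw hww hstar
  have hce : edgeLen v' 2 = edgeLen v 2 := by
    rw [sce, tce, ← h1, ← h2]
  rw [Mdist, hce]
  exact key
end
end
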